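/- Under the hypotheses of Theorem 2 except the iteration-count condition, i.e.: E a real normed vector space, (δv_k) a sequence in E with partial sums converging to v ∈ E, 0 < ρ < 1, c > 0, TOL > 0, ‖δv_k‖ ≤ c·ρ^k for all k, r ∈ ℕ, and (δṽ_k)_{k=0,…,r} in E with ‖δṽ_k − δv_k‖ ≤ (1−ρ)·TOL/(r+1) for all k = 0,…,r, the total error after r+1 inexact sweeps satisfies ‖∑_{k=0}^{r} δṽ_k − v‖ ≤ (1−ρ)·TOL + c·ρ^{r+1}/(1−ρ). -/

import Mathlib

/-!
Write `S n = ∑_{k<n} δv k` for the exact partial sums. The error splits as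
`(∑ δṽ - S (r+1)) + (S (r+1) - v)`. The first part is at most `r+1` perturbations of size
`(1-ρ)·TOL/(r+1)`; the second is the distance from `S (r+1)` to the limit of a sequence whose
increments `δv k` are bounded by `c·ρ^k`, i.e. a geometric tail `c·ρ^(r+1)/(1-ρ)`.
-/

open Finset Filter Topology

theorem norm_sum_sub_sum_le_card_mul {ι E : Type*} [SeminormedAddCommGroup E] (s : Finset ι)
    {f g : ι → E} {ε : ℝ} (h : ∀ i ∈ s, ‖f i - g i‖ ≤ ε) :
    ‖∑ i ∈ s, f i - ∑ i ∈ s, g i‖ ≤ #s * ε := by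
  rw [← sum_sub_distrib]
  exact (norm_sum_le_of_le s h).trans_eq (by simp)

theorem norm_sub_sum_range_le_of_norm_le_geometric {E : Type*} [SeminormedAddCommGroup E]
    {f : ℕ → E} {v : E} {c ρ : ℝ} (hρ : ρ < 1) (hf : ∀ k, ‖f k‖ ≤ c * ρ ^ k)
    (hv : Tendsto (fun n ↦ ∑ k ∈ range n, f k) atTop (𝓝 v)) (n : ℕ) :
    ‖∑ k ∈ range n, f k - v‖ ≤ c * ρ ^ n / (1 - ρ) := by
  have hstep (k : ℕ) : dist (∑ i ∈ range k, f i) (∑ i ∈ range (k + 1), f i) ≤ c * ρ ^ k := by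
    simpa [dist_eq_norm', sum_range_succ] using hf k
  simpa [dist_eq_norm] using dist_le_of_le_geometric_of_tendsto ρ c hρ hstep hv n

theorem inexact_sdc_intermediate_bound_general
    {E : Type*} [NormedAddCommGroup E]
    (δv : ℕ → E) (v : E)
    (hconv : Filter.Tendsto (fun r : ℕ => ∑ k ∈ Finset.range (r + 1), δv k)
      Filter.atTop (nhds v))
    (ρ c TOL : ℝ) (hρ1 : ρ < 1)
    (hlin : ∀ k : ℕ, ‖δv k‖ ≤ c * ρ ^ k)
    (r : ℕ) (δv' : ℕ → E)
    (happrox : ∀ k ≤ r, ‖δv' k - δv k‖ ≤ (1 - ρ) * TOL / (r + 1)) :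
    ‖(∑ k ∈ Finset.range (r + 1), δv' k) - v‖ ≤
      (1 - ρ) * TOL + c * ρ ^ (r + 1) / (1 - ρ) := by
  have hperturb := norm_sum_sub_sum_le_card_mul (range (r + 1)) (f := δv') (g := δv)
    fun k hk ↦ happrox k (Nat.lt_succ_iff.mp (mem_range.mp hk))
  have htail := norm_sub_sum_range_le_of_norm_le_geometric hρ1 hlin
    ((tendsto_add_atTop_iff_nat 1).mp hconv) (r + 1)
  calc ‖∑ k ∈ range (r + 1), δv' k - v‖
      = ‖(∑ k ∈ range (r + 1), δv' k - ∑ k ∈ range (r + 1), δv k)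
          + (∑ k ∈ range (r + 1), δv k - v)‖ := by rw [sub_add_sub_cancel]
    _ ≤ (r + 1) * ((1 - ρ) * TOL / (r + 1)) + c * ρ ^ (r + 1) / (1 - ρ) := by
        grw [norm_add_le, hperturb, htail]
        simp
    _ = (1 - ρ) * TOL + c * ρ ^ (r + 1) / (1 - ρ) := by field_simp

/-- Combined intermediate estimate in the proof of Theorem 2 of the paper
(triangle inequality): the total error of `r+1` inexact sweeps is bounded by the
accumulated perturbation `(1−ρ)·TOL` plus the geometric tail `c·ρ^{r+1}/(1−ρ)`. -/
theorem inexact_sdc_intermediate_bound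
    {E : Type*} [NormedAddCommGroup E] [NormedSpace ℝ E]
    (δv : ℕ → E) (v : E)
    (hconv : Filter.Tendsto (fun r : ℕ => ∑ k ∈ Finset.range (r + 1), δv k)
      Filter.atTop (nhds v))
    (ρ c TOL : ℝ) (hρ0 : 0 < ρ) (hρ1 : ρ < 1) (hc : 0 < c) (hTOL : 0 < TOL)
    (hlin : ∀ k : ℕ, ‖δv k‖ ≤ c * ρ ^ k)
    (r : ℕ) (δv' : ℕ → E)
    (happrox : ∀ k ≤ r, ‖δv' k - δv k‖ ≤ (1 - ρ) * TOL / (r + 1)) :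
    ‖(∑ k ∈ Finset.range (r + 1), δv' k) - v‖ ≤
      (1 - ρ) * TOL + c * ρ ^ (r + 1) / (1 - ρ) :=
  inexact_sdc_intermediate_bound_general δv v hconv ρ c TOL hρ1 hlin r δv' happrox
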